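/- If f(d) denotes the maximum cardinality of an almost-equidistant set in ℝ^d and R(a,b) denotes the Ramsey number, then f(d) ≤ R(d+2, 3) − 1. -/

import Mathlib

/-!
Colour a pair of points of `V` blue if they are at distance 1 and red otherwise. In a blue
clique, translating one point to the origin turns the others into vectors with Gram matrix
`(I + J) / 2`, which is positive definite; so a blue clique has at most `d + 1` points. A red
triangle would be three points with no unit distance among them, which is excluded. Hence `V`
contains neither a blue `K_(d+2)` nor a red triangle, i.e. `|V| < R(d + 2, 3)`.
-/

open Finset RealInnerProductSpace

/-- The Ramsey number `R a b`: the least `n` such that every blue/red colouring of the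
edges of the complete graph on `n` vertices (given by a graph `G` of blue edges, with
non-edges red) contains a blue clique of size `a` or a red clique of size `b`. -/
noncomputable def ramseyNumber (a b : ℕ) : ℕ :=
  sInf {n : ℕ | ∀ G : SimpleGraph (Fin n), ∃ s : Finset (Fin n),
    (G.IsClique ↑s ∧ s.card = a) ∨ (Gᶜ.IsClique ↑s ∧ s.card = b)}

theorem linearIndependent_of_inner_eq_ite {ι E : Type*} [Fintype ι] [DecidableEq ι]
    [NormedAddCommGroup E] [InnerProductSpace ℝ E] {v : ι → E} {c : ℝ} (hc₀ : 0 ≤ c)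
    (hc₁ : c < 1) (hv : ∀ i j, ⟪v i, v j⟫ = if i = j then 1 else c) :
    LinearIndependent ℝ v := by
  rw [Fintype.linearIndependent_iff]
  intro g hg
  set S := ∑ i, g i
  -- pairing the relation with `v j` gives `(1 - c) g j + c S = 0`
  have hj : ∀ j, (1 - c) * g j + c * S = 0 := fun j ↦ by
    have h0 : ⟪∑ i, g i • v i, v j⟫ = 0 := by rw [hg, inner_zero_left]
    rw [← h0, sum_inner, mul_sum, ← Fintype.sum_ite_eq' j fun i ↦ (1 - c) * g i,
      ← sum_add_distrib]
    refine sum_congr rfl fun i _ ↦ ?_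
    rw [real_inner_smul_left, hv]
    split_ifs <;> ring
  have hS : S = 0 := by
    have hsum : (1 - c + c * Fintype.card ι) * S = 0 := by
      have := Finset.sum_eq_zero (s := univ) fun j _ ↦ hj j
      rw [sum_add_distrib, ← mul_sum, sum_const, card_univ, nsmul_eq_mul] at this
      linarith
    exact (mul_eq_zero.1 hsum).resolve_left (by positivity)
  intro j
  have := hj j
  rw [hS, mul_zero, add_zero] at this
  exact (mul_eq_zero.1 this).resolve_left (by linarith)

def unitDistanceGraph (P : Type*) [MetricSpace P] : SimpleGraph P where
  Adj x y := dist x y = 1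
  symm := ⟨fun x y h ↦ (dist_comm y x).trans h⟩
  loopless := ⟨fun x h ↦ by simp at h⟩

@[simp]
theorem unitDistanceGraph_adj {P : Type*} [MetricSpace P] {x y : P} :
    (unitDistanceGraph P).Adj x y ↔ dist x y = 1 := Iff.rfl

theorem inner_sub_sub_of_dist_eq_one {E : Type*} [NormedAddCommGroup E] [InnerProductSpace ℝ E]
    {p x y : E} (hx : dist x p = 1) (hy : dist y p = 1) (hxy : dist x y = 1) :
    ⟪x - p, y - p⟫ = 1 / 2 := by
  have h := norm_sub_sq_real (x - p) (y - p)
  rw [sub_sub_sub_cancel_right, ← dist_eq_norm, ← dist_eq_norm, ← dist_eq_norm] at h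
  rw [hx, hy, hxy] at h
  linarith

theorem card_le_finrank_add_one_of_isClique_unitDistanceGraph {E : Type*}
    [NormedAddCommGroup E] [InnerProductSpace ℝ E] [FiniteDimensional ℝ E] {s : Finset E}
    (hs : (unitDistanceGraph E).IsClique (s : Set E)) : #s ≤ Module.finrank ℝ E + 1 := by
  classical
  obtain rfl | ⟨p, hp⟩ := s.eq_empty_or_nonempty
  · simp
  have hdist : ∀ x ∈ s, ∀ y ∈ s, x ≠ y → dist x y = 1 := fun x hx y hy ↦ hs hx hy
  have hli : LinearIndependent ℝ fun x : s.erase p ↦ (x : E) - p := by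
    refine linearIndependent_of_inner_eq_ite (c := 1 / 2) (by norm_num) (by norm_num) ?_
    rintro ⟨x, hx⟩ ⟨y, hy⟩
    obtain ⟨hxp, hx⟩ := mem_erase.1 hx
    obtain ⟨hyp, hy⟩ := mem_erase.1 hy
    split_ifs with hxy
    · cases hxy
      rw [real_inner_self_eq_norm_sq, ← dist_eq_norm, hdist x hx p hp hxp, one_pow]
    · exact inner_sub_sub_of_dist_eq_one (hdist x hx p hp hxp) (hdist y hy p hp hyp)
        (hdist x hx y hy fun h ↦ hxy (Subtype.ext h))
  have := hli.fintype_card_le_finrank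
  rw [Fintype.card_coe, card_erase_of_mem hp] at this
  omega

namespace SimpleGraph

-- Ramsey's property relative to a vertex set `W`, so that the induction can pass to
-- neighbourhoods without changing the vertex type.
def RamseyBound (a b n : ℕ) : Prop :=
  ∀ (α : Type) (G : SimpleGraph α) (W : Finset α), n ≤ #W →
    ∃ s ⊆ W, G.IsNClique a s ∨ Gᶜ.IsNClique b s

theorem ramseyBound_zero_left (b : ℕ) : RamseyBound 0 b 0 :=
  fun _ _ _ _ ↦ ⟨∅, empty_subset _, .inl (isNClique_empty.2 rfl)⟩

theorem ramseyBound_zero_right (a : ℕ) : RamseyBound a 0 0 :=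
  fun _ _ _ _ ↦ ⟨∅, empty_subset _, .inr (isNClique_empty.2 rfl)⟩

theorem RamseyBound.succ_succ {a b n₁ n₂ : ℕ} (h₁ : RamseyBound a (b + 1) n₁)
    (h₂ : RamseyBound (a + 1) b n₂) : RamseyBound (a + 1) (b + 1) (n₁ + n₂ + 1) := by
  classical
  intro α G W hW
  obtain ⟨v, hv⟩ : W.Nonempty := card_pos.1 (by omega)
  set N := (W.erase v).filter (G.Adj v)
  set M := (W.erase v).filter (Gᶜ.Adj v)
  have hNM : #N + #M = #W - 1 := by
    have hM : M = (W.erase v).filter (¬G.Adj v ·) :=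
      filter_congr fun x hx ↦ by simp [compl_adj, (ne_of_mem_erase hx).symm]
    rw [hM, card_filter_add_card_filter_not, card_erase_of_mem hv]
  have hcard : n₁ ≤ #N ∨ n₂ ≤ #M := by omega
  have hsub {s : Finset α} (hs : s ⊆ W.erase v) : s ⊆ W := hs.trans (erase_subset _ _)
  have hins {s : Finset α} (hs : s ⊆ W.erase v) : insert v s ⊆ W := insert_subset hv (hsub hs)
  rcases hcard with hN | hM
  · obtain ⟨s, hs, hcl | hind⟩ := h₁ α G N hN
    · exact ⟨insert v s, hins (hs.trans (filter_subset _ _)),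
        .inl (hcl.insert fun _ hx ↦ (mem_filter.1 (hs hx)).2)⟩
    · exact ⟨s, hsub (hs.trans (filter_subset _ _)), .inr hind⟩
  · obtain ⟨s, hs, hcl | hind⟩ := h₂ α G M hM
    · exact ⟨s, hsub (hs.trans (filter_subset _ _)), .inl hcl⟩
    · exact ⟨insert v s, hins (hs.trans (filter_subset _ _)),
        .inr (hind.insert fun _ hx ↦ (mem_filter.1 (hs hx)).2)⟩

theorem exists_ramseyBound (a b : ℕ) : ∃ n, RamseyBound a b n := by
  induction a generalizing b with
  | zero => exact ⟨0, ramseyBound_zero_left b⟩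
  | succ a iha =>
    induction b with
    | zero => exact ⟨0, ramseyBound_zero_right (a + 1)⟩
    | succ b ihb =>
      obtain ⟨n₁, h₁⟩ := iha (b + 1)
      obtain ⟨n₂, h₂⟩ := ihb
      exact ⟨n₁ + n₂ + 1, h₁.succ_succ h₂⟩

theorem compl_comap_embedding {α β : Type*} (G : SimpleGraph β) (f : α ↪ β) :
    (G.comap f)ᶜ = Gᶜ.comap f := by
  ext x y
  simp [f.injective.ne_iff]

theorem IsNClique.map_of_comap {α β : Type*} {G : SimpleGraph β} {f : α ↪ β} {n : ℕ}
    {s : Finset α} (h : (G.comap f).IsNClique n s) : G.IsNClique n (s.map f) :=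
  h.map.mono (map_comap_le f G)

theorem ramseyBound_of_forall_fin {a b m : ℕ}
    (hm : ∀ G : SimpleGraph (Fin m), ∃ s, G.IsNClique a s ∨ Gᶜ.IsNClique b s) :
    RamseyBound a b m := by
  intro α G W hW
  obtain ⟨t, htW, rfl⟩ := exists_subset_card_eq hW
  let f : Fin #t ↪ α := t.equivFin.symm.toEmbedding.trans (.subtype _)
  have hfW {s : Finset (Fin #t)} : s.map f ⊆ W := fun x hx ↦ by
    obtain ⟨i, -, rfl⟩ := mem_map.1 hx
    exact htW (t.equivFin.symm i).2
  obtain ⟨s, hcl | hind⟩ := hm (G.comap f)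
  · exact ⟨s.map f, hfW, .inl hcl.map_of_comap⟩
  · rw [compl_comap_embedding] at hind
    exact ⟨s.map f, hfW, .inr hind.map_of_comap⟩

theorem ramseyBound_ramseyNumber (a b : ℕ) : RamseyBound a b (ramseyNumber a b) := by
  obtain ⟨n, hn⟩ := exists_ramseyBound a b
  have hmem : n ∈ {n : ℕ | ∀ G : SimpleGraph (Fin n), ∃ s : Finset (Fin n),
      (G.IsClique ↑s ∧ s.card = a) ∨ (Gᶜ.IsClique ↑s ∧ s.card = b)} := fun G ↦ by
    obtain ⟨s, -, hs⟩ := hn (Fin n) G univ (by simp)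
    exact ⟨s, hs.imp (isNClique_iff _).1 (isNClique_iff _).1⟩
  refine ramseyBound_of_forall_fin fun G ↦ ?_
  obtain ⟨s, hs⟩ := Nat.sInf_mem ⟨n, hmem⟩ G
  exact ⟨s, hs.imp (isNClique_iff _).2 (isNClique_iff _).2⟩

end SimpleGraph

theorem almost_equidistant_le_ramsey (d : ℕ) (V : Finset (EuclideanSpace ℝ (Fin d)))
    (hAE : ∀ x ∈ V, ∀ y ∈ V, ∀ z ∈ V, x ≠ y → y ≠ z → x ≠ z →
      dist x y = 1 ∨ dist y z = 1 ∨ dist x z = 1) :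
    V.card ≤ ramseyNumber (d + 2) 3 - 1 := by
  by_contra! hV
  obtain ⟨s, hsV, hcl | hind⟩ := SimpleGraph.ramseyBound_ramseyNumber (d + 2) 3 _
    (unitDistanceGraph _) V (by omega)
  · have := card_le_finrank_add_one_of_isClique_unitDistanceGraph hcl.isClique
    rw [finrank_euclideanSpace_fin, hcl.card_eq] at this
    omega
  · obtain ⟨x, y, z, hxy, hxz, hyz, rfl⟩ := SimpleGraph.is3Clique_iff.1 hind
    simp only [insert_subset_iff, singleton_subset_iff] at hsV
    simp only [SimpleGraph.compl_adj, unitDistanceGraph_adj] at hxy hxz hyz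
    rcases hAE x hsV.1 y hsV.2.1 z hsV.2.2 hxy.1 hyz.1 hxz.1 with h | h | h
    exacts [hxy.2 h, hyz.2 h, hxz.2 h]
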